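/- arXiv:0802.0947 — 3 statements merged into one kernel-verified Lean document; each statement's English description precedes it below -/
import Mathlib

section
/- For the sequence λ_0 = 0, λ_{n+1} = (1/2)(λ_n + sqrt(λ_n^2 + 4)), one has sqrt(n) ≤ λ_n ≤ sqrt(2n) for all n ≥ 0. -/
/-! The next term `y = λₙ₊₁` is the positive root of `y² = λₙ y + 1`, so `λₙ = y - 1/y` and
`λₙ₊₁² = λₙ² + 2 - λₙ₊₁⁻²`. As `λₙ₊₁ ≥ 1`, each step raises `λ²` by at least `1` and at most `2`. -/

noncomputable def lam : ℕ → ℝ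
  | 0 => 0
  | n + 1 => (lam n + Real.sqrt (lam n ^ 2 + 4)) / 2

theorem sq_half_add_sqrt_sq_add_four (x : ℝ) :
    ((x + √(x ^ 2 + 4)) / 2) ^ 2 = x * ((x + √(x ^ 2 + 4)) / 2) + 1 := by
  have hs : √(x ^ 2 + 4) ^ 2 = x ^ 2 + 4 := Real.sq_sqrt (by positivity)
  linear_combination hs / 4

theorem lam_succ_sq (n : ℕ) : lam (n + 1) ^ 2 = lam n * lam (n + 1) + 1 :=
  sq_half_add_sqrt_sq_add_four (lam n)

theorem lam_nonneg : ∀ n, 0 ≤ lam n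
  | 0 => le_rfl
  | n + 1 => by
    have : |lam n| ≤ √(lam n ^ 2 + 4) := Real.abs_le_sqrt (by linarith)
    simp only [lam]
    linarith [neg_abs_le (lam n)]

theorem one_le_lam_succ (n : ℕ) : 1 ≤ lam (n + 1) := by
  have : 2 ≤ √(lam n ^ 2 + 4) :=
    Real.le_sqrt_of_sq_le (by nlinarith [lam_nonneg n])
  simp only [lam]
  linarith [lam_nonneg n]

theorem lam_succ_sq_add_inv_sq (n : ℕ) :
    lam (n + 1) ^ 2 + (lam (n + 1) ^ 2)⁻¹ = lam n ^ 2 + 2 := by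
  have hy : lam (n + 1) ≠ 0 := (one_pos.trans_le (one_le_lam_succ n)).ne'
  have hx : lam n = lam (n + 1) - (lam (n + 1))⁻¹ := by
    field_simp
    linear_combination -lam_succ_sq n
  rw [hx]
  field_simp
  ring

theorem lam_sq_add_one_le (n : ℕ) : lam n ^ 2 + 1 ≤ lam (n + 1) ^ 2 := by
  have : (lam (n + 1) ^ 2)⁻¹ ≤ 1 :=
    inv_le_one_of_one_le₀ (one_le_pow₀ (one_le_lam_succ n))
  linarith [lam_succ_sq_add_inv_sq n]

theorem lam_succ_sq_le (n : ℕ) : lam (n + 1) ^ 2 ≤ lam n ^ 2 + 2 := by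
  have : 0 ≤ (lam (n + 1) ^ 2)⁻¹ := by positivity
  linarith [lam_succ_sq_add_inv_sq n]

theorem natCast_le_lam_sq : ∀ n : ℕ, (n : ℝ) ≤ lam n ^ 2
  | 0 => by simp [lam]
  | n + 1 => by
    push_cast
    linarith [natCast_le_lam_sq n, lam_sq_add_one_le n]

theorem lam_sq_le_two_mul : ∀ n : ℕ, lam n ^ 2 ≤ 2 * n
  | 0 => by simp [lam]
  | n + 1 => by
    push_cast
    linarith [lam_sq_le_two_mul n, lam_succ_sq_le n]

theorem stmt_3 : ∀ n : ℕ, Real.sqrt n ≤ lam n ∧ lam n ≤ Real.sqrt (2 * n) := fun n =>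
  ⟨Real.sqrt_le_iff.mpr ⟨lam_nonneg n, natCast_le_lam_sq n⟩,
    Real.le_sqrt_of_sq_le (lam_sq_le_two_mul n)⟩
end

section
/- Let f : (0,∞) → (0,∞) satisfy f(s) = f(s+1) - 1/f(s+1) for all s > 0 and suppose log f is concave and f(n) = λ_n for all integers n ≥ 1, with λ_n as above. Then for all n ≥ 1 and 1 ≤ k ≤ n, λ_{n+1}^{k-1} λ_{n-k+1} ≤ λ_n^k. -/
/-! The integer n is the mean of n + 1 and n - k + 1 with weights (k - 1)/k and 1/k, so concavity
of log f gives (k - 1) log f(n + 1) + log f(n - k + 1) ≤ k log f(n); exponentiate and use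
f(j) = λ_j. -/

open Real

section WeightedMean

variable {s : Set ℝ} {x y m : ℝ}

lemma div_smul_add_one_div_smul (hm : 0 ≤ m) :
    (m / (m + 1)) • x + (1 / (m + 1)) • y = (m * x + y) / (m + 1) := by
  simp only [smul_eq_mul]; field_simp

lemma Convex.weightedMean_mem (hs : Convex ℝ s) (hx : x ∈ s) (hy : y ∈ s) (hm : 0 ≤ m) :
    (m * x + y) / (m + 1) ∈ s := by
  rw [← div_smul_add_one_div_smul hm]
  exact hs hx hy (by positivity) (by positivity) (by field_simp)

lemma ConcaveOn.mul_add_le_weightedMean {g : ℝ → ℝ} (hg : ConcaveOn ℝ s g) (hx : x ∈ s)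
    (hy : y ∈ s) (hm : 0 ≤ m) :
    m * g x + g y ≤ (m + 1) * g ((m * x + y) / (m + 1)) := by
  have h := hg.2 hx hy (by positivity : 0 ≤ m / (m + 1)) (by positivity : 0 ≤ 1 / (m + 1))
    (by field_simp)
  rw [div_smul_add_one_div_smul hm (x := x), div_smul_add_one_div_smul hm,
    div_le_iff₀ (by positivity)] at h
  linarith

end WeightedMean

lemma pow_mul_le_pow_weightedMean_of_concaveOn_log {s : Set ℝ} {f : ℝ → ℝ}
    (hpos : ∀ x ∈ s, 0 < f x) (hf : ConcaveOn ℝ s fun x => log (f x)) {x y : ℝ}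
    (hx : x ∈ s) (hy : y ∈ s) (m : ℕ) :
    f x ^ m * f y ≤ f ((m * x + y) / (m + 1)) ^ (m + 1) := by
  have hz := hpos _ (hf.1.weightedMean_mem hx hy m.cast_nonneg)
  have hfx := hpos x hx
  have hfy := hpos y hy
  rw [← log_le_log_iff (by positivity) (by positivity), log_mul (by positivity) hfy.ne',
    log_pow, log_pow]
  push_cast
  exact hf.mul_add_le_weightedMean hx hy m.cast_nonneg

theorem stmt_14_general (f : ℝ → ℝ) (hpos : ∀ s : ℝ, 0 < s → 0 < f s)
    (hconcave : ConcaveOn ℝ (Set.Ioi 0) fun s => Real.log (f s))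
    (hfn : ∀ n : ℕ, 1 ≤ n → f n = lam n) :
    ∀ n : ℕ, 1 ≤ n → ∀ k : ℕ, 1 ≤ k → k ≤ n →
      lam (n + 1) ^ (k - 1) * lam (n - k + 1) ≤ lam n ^ k := by
  intro n hn k hk hkn
  obtain ⟨m, rfl⟩ : ∃ m, k = m + 1 := ⟨k - 1, by omega⟩
  have hmean : (m * ((n + 1 : ℕ) : ℝ) + ((n - (m + 1) + 1 : ℕ) : ℝ)) / (m + 1) = n := by
    rw [show n - (m + 1) + 1 = n - m by omega, Nat.cast_sub (by omega)]
    push_cast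
    field_simp
    ring
  have h := pow_mul_le_pow_weightedMean_of_concaveOn_log hpos hconcave
    (x := ((n + 1 : ℕ) : ℝ)) (y := ((n - (m + 1) + 1 : ℕ) : ℝ)) (Set.mem_Ioi.2 (by positivity))
    (Set.mem_Ioi.2 (by positivity)) m
  rwa [hmean, hfn (n + 1) (by omega), hfn (n - (m + 1) + 1) (by omega), hfn n hn,
    ← Nat.add_sub_cancel m 1] at h

theorem stmt_14 (f : ℝ → ℝ) (hpos : ∀ s : ℝ, 0 < s → 0 < f s)
    (hfe : ∀ s : ℝ, 0 < s → f s = f (s + 1) - 1 / f (s + 1))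
    (hconcave : ConcaveOn ℝ (Set.Ioi 0) fun s => Real.log (f s))
    (hfn : ∀ n : ℕ, 1 ≤ n → f n = lam n) :
    ∀ n : ℕ, 1 ≤ n → ∀ k : ℕ, 1 ≤ k → k ≤ n →
      lam (n + 1) ^ (k - 1) * lam (n - k + 1) ≤ lam n ^ k :=
  stmt_14_general f hpos hconcave hfn
end

section
/- Let f : (0,∞) → (0,∞) satisfy f(1) = 1, log(1/f) convex, and f(s) = f(s+1) - 1/f(s+1). Then for 0 < s ≤ 1 and n ≥ 2, λ_n (λ_{n+1}/λ_n)^s ≤ f(n+s) ≤ λ_n (λ_n/λ_{n-1})^s, where λ_n = f(n). -/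
/-!
Since `log (1 / f) = -log f`, the hypothesis says that `f` is log-concave on `(0, ∞)`.
Concavity of `log f` between `n` and `n + 1` bounds `log f (n + s)` from below by the chord,
and the decrease of the slopes of `log f` across `n - 1 < n < n + s` bounds it from above.
Exponentiating gives the two estimates.
-/

open Real Set

lemma log_mul_div_rpow {a b c : ℝ} (ha : 0 < a) (hb : 0 < b) (hc : 0 < c) (t : ℝ) :
    log (a * (b / c) ^ t) = log a + t * (log b - log c) := by
  rw [log_mul ha.ne' (rpow_pos_of_pos (div_pos hb hc) t).ne', log_rpow (div_pos hb hc),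
    log_div hb.ne' hc.ne']

section LogConcave

variable {S : Set ℝ} {f : ℝ → ℝ}

lemma mul_div_rpow_le_apply_of_concaveOn_log (hpos : ∀ x ∈ S, 0 < f x)
    (hf : ConcaveOn ℝ S fun x => log (f x)) {x y t : ℝ} (hx : x ∈ S) (hy : y ∈ S)
    (ht₀ : 0 ≤ t) (ht₁ : t ≤ 1) :
    f x * (f y / f x) ^ t ≤ f ((1 - t) * x + t * y) := by
  have hfx := hpos x hx
  have hfy := hpos y hy
  have hmem : (1 - t) * x + t * y ∈ S := hf.1 hx hy (by linarith) ht₀ (by ring)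
  have hjensen := hf.2 hx hy (by linarith : 0 ≤ 1 - t) ht₀ (by ring)
  simp only [smul_eq_mul] at hjensen
  rw [← log_le_log_iff (by positivity) (hpos _ hmem), log_mul_div_rpow hfx hfy hfx]
  linarith

lemma apply_le_mul_div_rpow_of_concaveOn_log (hpos : ∀ x ∈ S, 0 < f x)
    (hf : ConcaveOn ℝ S fun x => log (f x)) {x y z : ℝ} (hx : x ∈ S) (hy : y ∈ S) (hz : z ∈ S)
    (hxy : x < y) (hyz : y < z) :
    f z ≤ f y * (f y / f x) ^ ((z - y) / (y - x)) := by
  have hfx := hpos x hx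
  have hfy := hpos y hy
  have hslope := hf.slope_anti_adjacent hx hz hxy hyz
  rw [← log_le_log_iff (hpos z hz) (by positivity), log_mul_div_rpow hfy hfy hfx]
  calc log (f z) = log (f y) + (log (f z) - log (f y)) / (z - y) * (z - y) := by
        field_simp [(sub_pos.2 hyz).ne']; ring
    _ ≤ log (f y) + (log (f y) - log (f x)) / (y - x) * (z - y) := by
        gcongr
    _ = log (f y) + (z - y) / (y - x) * (log (f y) - log (f x)) := by ring

end LogConcave

theorem stmt_18_general (f : ℝ → ℝ) (hpos : ∀ s : ℝ, 0 < s → 0 < f s)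
    (hconv : ConvexOn ℝ (Set.Ioi 0) fun s => Real.log (1 / f s)) :
    ∀ n : ℕ, 2 ≤ n → ∀ s : ℝ, 0 < s → s ≤ 1 →
      f n * (f (n + 1) / f n) ^ s ≤ f (n + s) ∧
        f (n + s) ≤ f n * (f n / f ((n : ℝ) - 1)) ^ s := by
  intro n hn s hs hs1
  have hn2 : (2 : ℝ) ≤ n := by exact_mod_cast hn
  have hlog : ConcaveOn ℝ (Ioi 0) fun x => log (f x) :=
    hconv.neg.congr fun x _ => by simp [log_inv]
  constructor
  · have h := mul_div_rpow_le_apply_of_concaveOn_log hpos hlog (mem_Ioi.2 (by linarith : (0 : ℝ) < n))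
      (mem_Ioi.2 (by linarith : (0 : ℝ) < n + 1)) hs.le hs1
    rwa [show (1 - s) * n + s * (n + 1) = n + s by ring] at h
  · have h := apply_le_mul_div_rpow_of_concaveOn_log hpos hlog
      (mem_Ioi.2 (by linarith : (0 : ℝ) < n - 1)) (mem_Ioi.2 (by linarith))
      (mem_Ioi.2 (by linarith : (0 : ℝ) < n + s)) (sub_one_lt _) (lt_add_of_pos_right _ hs)
    rwa [show (n + s - n) / (n - (n - 1)) = s by ring] at h

theorem stmt_18 (f : ℝ → ℝ) (hpos : ∀ s : ℝ, 0 < s → 0 < f s) (h1 : f 1 = 1)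
    (hconv : ConvexOn ℝ (Set.Ioi 0) fun s => Real.log (1 / f s))
    (hfe : ∀ s : ℝ, 0 < s → f s = f (s + 1) - 1 / f (s + 1)) :
    ∀ n : ℕ, 2 ≤ n → ∀ s : ℝ, 0 < s → s ≤ 1 →
      f n * (f (n + 1) / f n) ^ s ≤ f (n + s) ∧
        f (n + s) ≤ f n * (f n / f ((n : ℝ) - 1)) ^ s :=
  stmt_18_general f hpos hconv
end
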